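/- arXiv:1611.03714 — 2 statements merged into one kernel-verified Lean document; each statement's English description precedes it below -/
import Mathlib

section
/- HA+EM₁⁻ proves Markov's principle: for every atomic predicate P, the formula ¬∀α P → ∃α P⊥ is derivable in HA+EM₁⁻. -/
/-! ## First-order terms of the language of arithmetic {0, S, +, ·, =} -/

inductive Trm : Type
  | var : ℕ → Trm
  | zero : Trm
  | succ : Trm → Trm
  | plus : Trm → Trm → Trm
  | times : Trm → Trm → Trm
  deriving DecidableEq

/-- The numeral `S (S ... (S 0))`. -/
def numeral : ℕ → Trm
  | 0 => .zero
  | n + 1 => .succ (numeral n)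

/-- Free (first-order) variables of a term. -/
def Trm.fv : Trm → Finset ℕ
  | .var n => {n}
  | .zero => ∅
  | .succ t => t.fv
  | .plus s t => s.fv ∪ t.fv
  | .times s t => s.fv ∪ t.fv

def Trm.Closed (t : Trm) : Prop := t.fv = ∅

/-- Substitution `t[m/α]` of the term `m` for the variable `α`. -/
def Trm.subst : Trm → ℕ → Trm → Trm
  | .var n, α, m => if n = α then m else .var n
  | .zero, _, _ => .zero
  | .succ t, α, m => .succ (t.subst α m)
  | .plus s t, α, m => .plus (s.subst α m) (t.subst α m)
  | .times s t, α, m => .times (s.subst α m) (t.subst α m)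

/-- Evaluation in the standard model, under an environment. -/
def Trm.eval (ρ : ℕ → ℕ) : Trm → ℕ
  | .var n => ρ n
  | .zero => 0
  | .succ t => t.eval ρ + 1
  | .plus s t => s.eval ρ + t.eval ρ
  | .times s t => s.eval ρ * t.eval ρ

/-! ## Formulas.  Atomic (decidable) predicates are signed equations:
`atom true s t` is `s = t` and `atom false s t` is `s ≠ t`; the complement `P⊥`
just flips the sign. -/

inductive Formula : Type
  | atom : Bool → Trm → Trm → Formula
  | and : Formula → Formula → Formula
  | or : Formula → Formula → Formula
  | imp : Formula → Formula → Formula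
  | all : ℕ → Formula → Formula
  | ex : ℕ → Formula → Formula
  deriving DecidableEq

/-- Falsum, as the (atomically false) atom `0 = S 0`. -/
def Formula.bot : Formula := .atom true .zero (.succ .zero)

/-- Negation `¬A := A → ⊥`. -/
def Formula.neg (A : Formula) : Formula := .imp A .bot

def Formula.IsAtom : Formula → Prop
  | .atom _ _ _ => True
  | _ => False

/-- The complement `P⊥` of an atomic predicate. -/
def Formula.compl : Formula → Formula
  | .atom b s t => .atom (!b) s t
  | A => A

def Formula.fv : Formula → Finset ℕ
  | .atom _ s t => s.fv ∪ t.fv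
  | .and A B => A.fv ∪ B.fv
  | .or A B => A.fv ∪ B.fv
  | .imp A B => A.fv ∪ B.fv
  | .all α A => A.fv.erase α
  | .ex α A => A.fv.erase α

def Formula.Closed (A : Formula) : Prop := A.fv = ∅

/-- Substitution `A[m/α]` of a first-order term for a first-order variable. -/
def Formula.subst : Formula → ℕ → Trm → Formula
  | .atom b s t, α, m => .atom b (s.subst α m) (t.subst α m)
  | .and A B, α, m => .and (A.subst α m) (B.subst α m)
  | .or A B, α, m => .or (A.subst α m) (B.subst α m)
  | .imp A B, α, m => .imp (A.subst α m) (B.subst α m)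
  | .all β A, α, m => if β = α then .all β A else .all β (A.subst α m)
  | .ex β A, α, m => if β = α then .ex β A else .ex β (A.subst α m)

/-- Truth value of an atomic formula under an environment. -/
def Formula.atomVal (ρ : ℕ → ℕ) : Formula → Bool
  | .atom b s t => (s.eval ρ == t.eval ρ) == b
  | _ => false

/-- Truth value of a *closed* atomic formula (`P ⇓ True` / `P ⇓ False`). -/
def Formula.atomTrue (P : Formula) : Bool := P.atomVal (fun _ => 0)

/-! ## Natural deduction, parametrized by an axiom schema `axs` and by a
(restricted) excluded-middle rule `emr B₁ B₂ C`, meaning: from `Γ, B₁ ⊢ C` and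
`Γ, B₂ ⊢ C` infer `Γ ⊢ C`. -/

inductive Deriv (axs : Formula → Prop) (emr : Formula → Formula → Formula → Prop) :
    List Formula → Formula → Prop
  | hyp {Γ A} : A ∈ Γ → Deriv axs emr Γ A
  | ax {Γ A} : axs A → Deriv axs emr Γ A
  | andI {Γ A B} : Deriv axs emr Γ A → Deriv axs emr Γ B → Deriv axs emr Γ (.and A B)
  | andE1 {Γ A B} : Deriv axs emr Γ (.and A B) → Deriv axs emr Γ A
  | andE2 {Γ A B} : Deriv axs emr Γ (.and A B) → Deriv axs emr Γ B
  | impI {Γ A B} : Deriv axs emr (A :: Γ) B → Deriv axs emr Γ (.imp A B)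
  | impE {Γ A B} : Deriv axs emr Γ (.imp A B) → Deriv axs emr Γ A → Deriv axs emr Γ B
  | orI1 {Γ A B} : Deriv axs emr Γ A → Deriv axs emr Γ (.or A B)
  | orI2 {Γ A B} : Deriv axs emr Γ B → Deriv axs emr Γ (.or A B)
  | orE {Γ A B C} : Deriv axs emr Γ (.or A B) → Deriv axs emr (A :: Γ) C →
      Deriv axs emr (B :: Γ) C → Deriv axs emr Γ C
  | allI {Γ α A} : Deriv axs emr Γ A → (∀ B ∈ Γ, α ∉ B.fv) → Deriv axs emr Γ (.all α A)
  | allE {Γ α A} (m : Trm) : Deriv axs emr Γ (.all α A) → Deriv axs emr Γ (A.subst α m)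
  | exI {Γ α A} (m : Trm) : Deriv axs emr Γ (A.subst α m) → Deriv axs emr Γ (.ex α A)
  | exE {Γ α A C} : Deriv axs emr Γ (.ex α A) → Deriv axs emr (A :: Γ) C →
      α ∉ C.fv → (∀ B ∈ Γ, α ∉ B.fv) → Deriv axs emr Γ C
  | botE {Γ A} : Deriv axs emr Γ Formula.bot → Deriv axs emr Γ A
  | em {Γ B₁ B₂ C} : emr B₁ B₂ C → Deriv axs emr (B₁ :: Γ) C →
      Deriv axs emr (B₂ :: Γ) C → Deriv axs emr Γ C

/-- No excluded-middle rule at all (pure intuitionistic logic). -/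
def noEM : Formula → Formula → Formula → Prop := fun _ _ _ => False

/-- The full classical rule EM: cases `A` / `¬A`, arbitrary conclusion. -/
def fullEM : Formula → Formula → Formula → Prop := fun B₁ B₂ _ => B₂ = B₁.neg

/-- The rule EM⁻: cases `A` / `¬A` for arbitrary `A`, but the conclusion must be
a simply existential (Σ⁰₁) formula `∃x P` with `P` atomic. -/
def emMinus : Formula → Formula → Formula → Prop := fun B₁ B₂ C =>
  B₂ = B₁.neg ∧ ∃ x P, P.IsAtom ∧ C = .ex x P

/-- The rule EM₁⁻: cases `∀α P` / `∃α P⊥` with `P` atomic, conclusion a simply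
existential formula `∃x Q` with `Q` atomic. -/
def em1Minus : Formula → Formula → Formula → Prop := fun B₁ B₂ C =>
  ∃ α P, P.IsAtom ∧ B₁ = .all α P ∧ B₂ = .ex α P.compl ∧ ∃ x Q, Q.IsAtom ∧ C = .ex x Q

/-! ## The axioms of (Heyting/Peano) arithmetic -/

inductive HAAxiom : Formula → Prop
  | eqRefl : HAAxiom (.all 0 (.atom true (.var 0) (.var 0)))
  | eqSym : HAAxiom (.all 0 (.all 1 (.imp (.atom true (.var 0) (.var 1))
      (.atom true (.var 1) (.var 0)))))
  | eqTrans : HAAxiom (.all 0 (.all 1 (.all 2 (.imp (.atom true (.var 0) (.var 1))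
      (.imp (.atom true (.var 1) (.var 2)) (.atom true (.var 0) (.var 2)))))))
  | succCong : HAAxiom (.all 0 (.all 1 (.imp (.atom true (.var 0) (.var 1))
      (.atom true (.succ (.var 0)) (.succ (.var 1))))))
  | succInj : HAAxiom (.all 0 (.all 1 (.imp (.atom true (.succ (.var 0)) (.succ (.var 1)))
      (.atom true (.var 0) (.var 1)))))
  | succNeZero : HAAxiom (.all 0 (.imp (.atom true (.succ (.var 0)) .zero) Formula.bot))
  | plusZero : HAAxiom (.all 0 (.atom true (.plus (.var 0) .zero) (.var 0)))
  | plusSucc : HAAxiom (.all 0 (.all 1 (.atom true (.plus (.var 0) (.succ (.var 1)))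
      (.succ (.plus (.var 0) (.var 1))))))
  | timesZero : HAAxiom (.all 0 (.atom true (.times (.var 0) .zero) .zero))
  | timesSucc : HAAxiom (.all 0 (.all 1 (.atom true (.times (.var 0) (.succ (.var 1)))
      (.plus (.times (.var 0) (.var 1)) (.var 0)))))
  /-- The induction schema `∀α (A(α) → A(Sα)) → A(0) → ∀α A(α)`. -/
  | ind (A : Formula) (α : ℕ) : HAAxiom (.imp (.all α (.imp A (A.subst α (.succ (.var α)))))
      (.imp (A.subst α .zero) (.all α A)))
  /-- Decidability of atomic predicates: `P ∨ P⊥`. -/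
  | atomDec (b : Bool) (s t : Trm) : HAAxiom (.or (.atom b s t) (.atom (!b) s t))
  /-- `P⊥ → ¬P`. -/
  | complIntro (b : Bool) (s t : Trm) :
      HAAxiom (.imp (.atom (!b) s t) (Formula.neg (.atom b s t)))
  /-- `¬P → P⊥`. -/
  | complElim (b : Bool) (s t : Trm) :
      HAAxiom (.imp (Formula.neg (.atom b s t)) (.atom (!b) s t))

/-- Markov's principle as an axiom schema: `¬∀α P → ∃α P⊥` for atomic `P`. -/
def MRK : Formula → Prop := fun F =>
  ∃ (α : ℕ) (b : Bool) (s t : Trm),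
    F = .imp (Formula.neg (.all α (.atom b s t))) (.ex α (.atom (!b) s t))

/-! ## Translations -/

/-- The Gödel–Gentzen negative translation. -/
def Formula.ggN : Formula → Formula
  | .atom b s t => Formula.neg (Formula.neg (.atom b s t))
  | .and A B => .and A.ggN B.ggN
  | .or A B => Formula.neg (.and (Formula.neg A.ggN) (Formula.neg B.ggN))
  | .imp A B => .imp A.ggN B.ggN
  | .all α A => .all α A.ggN
  | .ex α A => Formula.neg (.all α (Formula.neg A.ggN))

/-- The ∃-translation: the identity on atoms, commuting with `∧`, `∨`, `→`, `∃`,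
and `(∀x F)^∃ = ¬∃x ¬F^∃`. -/
def Formula.exT : Formula → Formula
  | .atom b s t => .atom b s t
  | .and A B => .and A.exT B.exT
  | .or A B => .or A.exT B.exT
  | .imp A B => .imp A.exT B.exT
  | .all α A => Formula.neg (.ex α (Formula.neg A.exT))
  | .ex α A => .ex α A.exT

/-- The axioms of `HA^∃` / `PA^∃`: the ∃-translations of the axioms of HA/PA. -/
def HAAxiomExT : Formula → Prop := fun A => ∃ B, HAAxiom B ∧ A = B.exT

/-- **HA+EM₁⁻ proves Markov's principle**: for every atomic predicate `P`
(coded as the signed equation `atom b s t`), the formula `¬∀α P → ∃α P⊥`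
is derivable in HA extended with the rule EM₁⁻. -/
theorem markov_provable_in_ha_em1minus (α : ℕ) (b : Bool) (s t : Trm) :
    Deriv HAAxiom em1Minus []
      (.imp (Formula.neg (.all α (.atom b s t))) (.ex α (.atom (!b) s t))) := by
  apply Deriv.impI
  apply Deriv.em (B₁ := .all α (.atom b s t)) (B₂ := .ex α (.atom (!b) s t))
  · exact ⟨α, .atom b s t, trivial, rfl, rfl, α, .atom (!b) s t, trivial, rfl⟩
  · exact Deriv.botE (Deriv.impE (A := .all α (.atom b s t)) (Deriv.hyp (by simp [Formula.neg]))
      (Deriv.hyp (by simp)))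
  · exact Deriv.hyp (by simp)
end

section
/- HA proves the ∃-translations of its own axioms: HA ⊢ A^∃ for every axiom A of HA (in particular HA proves each translated induction instance P(0) ∧ (¬∃α ¬(P(α) → P(Sα))) → ¬∃α ¬P(α)); consequently, every formula provable in HA^∃ is provable in HA. -/
/-! Every axiom of HA other than induction is the universal closure of a quantifier-free formula,
and `∀x F` intuitionistically implies `¬∃x ¬F`. The translated induction instance for `P` is an
instance of induction for `¬¬P`: its hypotheses give `¬¬P(0)` and `∀α (¬¬P(α) → ¬¬P(Sα))`, and
`∀α ¬¬P` implies `¬∃α ¬P`.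

An `HA^∃`-derivation uses finitely many axioms; adding the universal
closures of these, which HA proves, as closed hypotheses turns it into an HA-derivation, and the
closed hypotheses are then discharged one at a time. -/

namespace Trm

@[simp] lemma subst_var_self (t : Trm) (α : ℕ) : t.subst α (.var α) = t := by
  induction t with
  | var n => by_cases h : n = α <;> simp [subst, h]
  | zero => rfl
  | succ t ih => simp [subst, ih]
  | plus s t ihs iht | times s t ihs iht => simp [subst, ihs, iht]

lemma notMem_fv_subst (t : Trm) {α : ℕ} {m : Trm} (hm : α ∉ m.fv) :
    α ∉ (t.subst α m).fv := by
  induction t with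
  | var n => by_cases h : n = α <;> simp_all [subst, fv, eq_comm]
  | zero => simp [subst, fv]
  | succ t ih => simpa [subst, fv] using ih
  | plus s t ihs iht | times s t ihs iht => simp [subst, fv, ihs, iht]

end Trm

namespace Formula

@[simp] lemma subst_var_self (A : Formula) (α : ℕ) : A.subst α (.var α) = A := by
  induction A with
  | atom b s t => simp [subst]
  | and A B ihA ihB | or A B ihA ihB | imp A B ihA ihB => simp [subst, ihA, ihB]
  | all β A ih | ex β A ih => by_cases h : β = α <;> simp [subst, h, ih]

lemma notMem_fv_subst (A : Formula) {α : ℕ} {m : Trm} (hm : α ∉ m.fv) :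
    α ∉ (A.subst α m).fv := by
  induction A with
  | atom b s t => simp [subst, fv, Trm.notMem_fv_subst _ hm]
  | and A B ihA ihB | or A B ihA ihB | imp A B ihA ihB => simp [subst, fv, ihA, ihB]
  | all β A ih | ex β A ih => by_cases h : β = α <;> simp [subst, fv, h, ih]

lemma exT_subst (A : Formula) (α : ℕ) (m : Trm) : (A.subst α m).exT = A.exT.subst α m := by
  induction A with
  | atom b s t => rfl
  | and A B ihA ihB | or A B ihA ihB | imp A B ihA ihB => simp [subst, exT, ihA, ihB]
  | all β A ih => by_cases h : β = α <;> simp [subst, exT, neg, bot, Trm.subst, h, ih]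
  | ex β A ih => by_cases h : β = α <;> simp [subst, exT, h, ih]

def alls : List ℕ → Formula → Formula
  | [], A => A
  | x :: xs, A => .all x (alls xs A)

lemma fv_alls (xs : List ℕ) (A : Formula) : (A.alls xs).fv = A.fv \ xs.toFinset := by
  induction xs with
  | nil => simp [alls]
  | cons x xs ih =>
    ext a
    simp only [alls, fv, ih, Finset.mem_erase, Finset.mem_sdiff, List.toFinset_cons,
      Finset.mem_insert, List.mem_toFinset]
    tauto

lemma closed_alls_fv_toList (A : Formula) : (A.alls A.fv.toList).Closed := by
  simp [Closed, fv_alls]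

end Formula

def ExtendsByClosed (Γ Γ' : List Formula) : Prop :=
  Γ ⊆ Γ' ∧ ∀ B ∈ Γ', B ∈ Γ ∨ B.Closed

namespace ExtendsByClosed

variable {Γ Γ' : List Formula}

lemma cons (h : ExtendsByClosed Γ Γ') (A : Formula) : ExtendsByClosed (A :: Γ) (A :: Γ') := by
  refine ⟨List.cons_subset_cons A h.1, fun B hB => ?_⟩
  rcases List.mem_cons.1 hB with rfl | hB
  · exact .inl List.mem_cons_self
  · exact (h.2 B hB).imp (List.mem_cons_of_mem _) id

lemma fresh (h : ExtendsByClosed Γ Γ') {α : ℕ} (hfv : ∀ B ∈ Γ, α ∉ B.fv) :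
    ∀ B ∈ Γ', α ∉ B.fv := fun B hB =>
  (h.2 B hB).elim (hfv B) fun hcl => (show B.fv = ∅ from hcl) ▸ Finset.notMem_empty α

end ExtendsByClosed

namespace Deriv

variable {axs : Formula → Prop} {emr : Formula → Formula → Formula → Prop}
  {Γ : List Formula} {A F : Formula}

/-- Weakening by closed formulas needs no renaming of eigenvariables. -/
theorem weaken {Γ' : List Formula} (h : Deriv axs emr Γ F) (hΓ : ExtendsByClosed Γ Γ') :
    Deriv axs emr Γ' F := by
  induction h generalizing Γ' with
  | hyp hA => exact .hyp (hΓ.1 hA)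
  | ax hA => exact .ax hA
  | andI _ _ ih₁ ih₂ => exact .andI (ih₁ hΓ) (ih₂ hΓ)
  | andE1 _ ih => exact .andE1 (ih hΓ)
  | andE2 _ ih => exact .andE2 (ih hΓ)
  | impI _ ih => exact .impI (ih (hΓ.cons _))
  | impE _ _ ih₁ ih₂ => exact .impE (ih₁ hΓ) (ih₂ hΓ)
  | orI1 _ ih => exact .orI1 (ih hΓ)
  | orI2 _ ih => exact .orI2 (ih hΓ)
  | orE _ _ _ ih ihA ihB => exact .orE (ih hΓ) (ihA (hΓ.cons _)) (ihB (hΓ.cons _))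
  | allI _ hfv ih => exact .allI (ih hΓ) (hΓ.fresh hfv)
  | allE m _ ih => exact .allE m (ih hΓ)
  | exI m _ ih => exact .exI m (ih hΓ)
  | exE _ _ hC hfv ih ihA => exact .exE (ih hΓ) (ihA (hΓ.cons _)) hC (hΓ.fresh hfv)
  | botE _ ih => exact .botE (ih hΓ)
  | em hr _ _ ih₁ ih₂ => exact .em hr (ih₁ (hΓ.cons _)) (ih₂ (hΓ.cons _))

lemma allE_var {α : ℕ} (h : Deriv axs emr Γ (.all α A)) : Deriv axs emr Γ A := by
  simpa using h.allE (.var α)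

lemma exI_var {α : ℕ} (h : Deriv axs emr Γ A) : Deriv axs emr Γ (.ex α A) :=
  .exI (.var α) (by simpa using h)

lemma imp_negNeg (A : Formula) : Deriv axs emr Γ (A.imp A.neg.neg) :=
  .impI (.impI (.impE (A := A) (.hyp List.mem_cons_self)
    (.hyp (List.mem_cons_of_mem _ List.mem_cons_self))))

lemma negExNeg_of_allNegNeg (α : ℕ) (A : Formula) (hfv : ∀ B ∈ Γ, α ∉ B.fv) :
    Deriv axs emr Γ ((Formula.all α A.neg.neg).imp (Formula.ex α A.neg).neg) := by
  refine .impI (.impI (.exE (.hyp List.mem_cons_self) ?_ ?_ ?_))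
  · exact .impE (A := A.neg) (allE_var (α := α) (.hyp (by simp [Formula.neg])))
      (.hyp List.mem_cons_self)
  · simp [Formula.bot, Formula.fv, Trm.fv]
  · simpa [Formula.fv, Formula.neg, Formula.bot, Trm.fv] using hfv

lemma exT_alls {M : Formula} (hM : M.exT = M) (xs : List ℕ)
    (h : Deriv axs emr [] (M.alls xs)) : Deriv axs emr [] (M.alls xs).exT := by
  induction xs with
  | nil => simpa [Formula.alls, hM] using h
  | cons x xs ih =>
    have hA : Deriv axs emr [] (M.alls xs).exT := ih h.allE_var
    exact .impE (negExNeg_of_allNegNeg x _ (by simp)) (.allI (.impE (imp_negNeg _) hA) (by simp))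

lemma alls_intro (xs : List ℕ) (h : Deriv axs emr [] A) : Deriv axs emr [] (A.alls xs) := by
  induction xs with
  | nil => exact h
  | cons x xs ih => exact .allI ih (by simp)

lemma of_alls {xs : List ℕ} (h : Deriv axs emr Γ (A.alls xs)) : Deriv axs emr Γ A := by
  induction xs with
  | nil => exact h
  | cons x xs ih => exact ih h.allE_var

end Deriv

lemma HAAxiom.deriv_exT_ind {emr : Formula → Formula → Formula → Prop} (B : Formula) (α : ℕ) :
    Deriv HAAxiom emr []
      (((Formula.ex α (B.imp (B.subst α (.succ (.var α)))).neg).neg).imp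
        ((B.subst α .zero).imp (Formula.ex α B.neg).neg)) := by
  set B' := B.subst α (.succ (.var α))
  set H := (Formula.ex α (B.imp B').neg).neg
  refine .impI (.impI ?_)
  have hfresh : ∀ G ∈ [B.subst α .zero, H], α ∉ G.fv := by
    simp [H, Formula.fv, Formula.neg, Formula.bot, Trm.fv, B.notMem_fv_subst (α := α)]
  have step : Deriv HAAxiom emr [B.subst α .zero, H]
      (.all α (B.neg.neg.imp B'.neg.neg)) := by
    refine .allI (.impI (.impI (.impE (A := .ex α (B.imp B').neg) (.hyp (by simp [H, Formula.neg]))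
      (.exI_var ?_)))) hfresh
    -- `¬(B → B[Sα])` holds here, since `¬¬B` and `¬B[Sα]` are assumed
    exact .impI (.impE (A := B.neg) (.hyp (by simp [Formula.neg]))
      (.impI (.impE (A := B') (.hyp (by simp [Formula.neg]))
        (.impE (A := B) (.hyp (by simp)) (.hyp List.mem_cons_self)))))
  have base : Deriv HAAxiom emr [B.subst α .zero, H] (B.subst α .zero).neg.neg :=
    .impE (.imp_negNeg _) (.hyp List.mem_cons_self)
  exact .impE (.negExNeg_of_allNegNeg α B hfresh)
    (.impE (.impE (.ax (.ind B.neg.neg α)) step) base)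

lemma HAAxiom.deriv_exT {emr : Formula → Formula → Formula → Prop} {A : Formula}
    (hA : HAAxiom A) : Deriv HAAxiom emr [] A.exT := by
  cases hA with
  | eqRefl => exact .exT_alls (xs := [0]) rfl (.ax .eqRefl)
  | eqSym => exact .exT_alls (xs := [0, 1]) rfl (.ax .eqSym)
  | eqTrans => exact .exT_alls (xs := [0, 1, 2]) rfl (.ax .eqTrans)
  | succCong => exact .exT_alls (xs := [0, 1]) rfl (.ax .succCong)
  | succInj => exact .exT_alls (xs := [0, 1]) rfl (.ax .succInj)
  | succNeZero => exact .exT_alls (xs := [0]) rfl (.ax .succNeZero)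
  | plusZero => exact .exT_alls (xs := [0]) rfl (.ax .plusZero)
  | plusSucc => exact .exT_alls (xs := [0, 1]) rfl (.ax .plusSucc)
  | timesZero => exact .exT_alls (xs := [0]) rfl (.ax .timesZero)
  | timesSucc => exact .exT_alls (xs := [0, 1]) rfl (.ax .timesSucc)
  | ind A α =>
    simpa only [Formula.exT, Formula.exT_subst] using deriv_exT_ind A.exT α
  | atomDec b s t => exact .ax (.atomDec b s t)
  | complIntro b s t => exact .ax (.complIntro b s t)
  | complElim b s t => exact .ax (.complElim b s t)

def ClosedTheorems (axs : Formula → Prop) (emr : Formula → Formula → Formula → Prop)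
    (Δ : List Formula) : Prop :=
  ∀ D ∈ Δ, D.Closed ∧ Deriv axs emr [] D

namespace ClosedTheorems

variable {axs : Formula → Prop} {emr : Formula → Formula → Formula → Prop}
  {Γ Δ Δ' : List Formula}

lemma append (hΔ : ClosedTheorems axs emr Δ) (hΔ' : ClosedTheorems axs emr Δ') :
    ClosedTheorems axs emr (Δ ++ Δ') :=
  List.forall_mem_append.2 ⟨hΔ, hΔ'⟩

lemma extendsByClosed (hΔ' : ClosedTheorems axs emr Δ') (hsub : Δ ⊆ Δ') :
    ExtendsByClosed (Γ ++ Δ) (Γ ++ Δ') := by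
  refine ⟨List.append_subset.2 ⟨List.subset_append_left _ _,
    fun _ hB => List.mem_append_right _ (hsub hB)⟩, fun B hB => ?_⟩
  rcases List.mem_append.1 hB with hB | hB
  · exact .inl (List.mem_append_left _ hB)
  · exact .inr (hΔ' B hB).1

lemma fresh_append (hΔ : ClosedTheorems axs emr Δ) {α : ℕ} (hfv : ∀ B ∈ Γ, α ∉ B.fv) :
    ∀ B ∈ Γ ++ Δ, α ∉ B.fv :=
  (hΔ.extendsByClosed (Γ := Γ) (List.nil_subset _)).fresh (by simpa using hfv)

end ClosedTheorems

namespace Deriv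

variable {axs axs' : Formula → Prop} {emr : Formula → Formula → Formula → Prop}
  {Γ Δ : List Formula} {F : Formula}

lemma weaken_append {Δ' : List Formula} (h : Deriv axs emr (Γ ++ Δ) F)
    (hΔ' : ClosedTheorems axs emr Δ') (hsub : Δ ⊆ Δ') : Deriv axs emr (Γ ++ Δ') F :=
  h.weaken (hΔ'.extendsByClosed hsub)

theorem exists_closedTheorems_of_axioms (hax : ∀ A, axs A → Deriv axs' emr [] A)
    (h : Deriv axs emr Γ F) : ∃ Δ, ClosedTheorems axs' emr Δ ∧ Deriv axs' emr (Γ ++ Δ) F := by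
  induction h with
  | hyp hA => exact ⟨[], by simp [ClosedTheorems], .hyp (List.mem_append_left _ hA)⟩
  | @ax _ A hA =>
    refine ⟨[A.alls A.fv.toList], ?_, .of_alls (xs := A.fv.toList) (.hyp (by simp))⟩
    simpa [ClosedTheorems] using ⟨A.closed_alls_fv_toList, alls_intro _ (hax A hA)⟩
  | andI _ _ ih₁ ih₂ =>
    obtain ⟨Δ₁, hΔ₁, d₁⟩ := ih₁
    obtain ⟨Δ₂, hΔ₂, d₂⟩ := ih₂
    have hΔ := hΔ₁.append hΔ₂
    exact ⟨_, hΔ, .andI (d₁.weaken_append hΔ (by simp)) (d₂.weaken_append hΔ (by simp))⟩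
  | andE1 _ ih => obtain ⟨Δ, hΔ, d⟩ := ih; exact ⟨Δ, hΔ, .andE1 d⟩
  | andE2 _ ih => obtain ⟨Δ, hΔ, d⟩ := ih; exact ⟨Δ, hΔ, .andE2 d⟩
  | impI _ ih => obtain ⟨Δ, hΔ, d⟩ := ih; exact ⟨Δ, hΔ, .impI d⟩
  | impE _ _ ih₁ ih₂ =>
    obtain ⟨Δ₁, hΔ₁, d₁⟩ := ih₁
    obtain ⟨Δ₂, hΔ₂, d₂⟩ := ih₂
    have hΔ := hΔ₁.append hΔ₂
    exact ⟨_, hΔ, .impE (d₁.weaken_append hΔ (by simp)) (d₂.weaken_append hΔ (by simp))⟩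
  | orI1 _ ih => obtain ⟨Δ, hΔ, d⟩ := ih; exact ⟨Δ, hΔ, .orI1 d⟩
  | orI2 _ ih => obtain ⟨Δ, hΔ, d⟩ := ih; exact ⟨Δ, hΔ, .orI2 d⟩
  | orE _ _ _ ih ihA ihB =>
    obtain ⟨Δ₁, hΔ₁, d₁⟩ := ih
    obtain ⟨Δ₂, hΔ₂, d₂⟩ := ihA
    obtain ⟨Δ₃, hΔ₃, d₃⟩ := ihB
    have hΔ := (hΔ₁.append hΔ₂).append hΔ₃
    exact ⟨_, hΔ, .orE (d₁.weaken_append hΔ (by simp))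
      (d₂.weaken_append hΔ (by simp)) (d₃.weaken_append hΔ (by simp))⟩
  | allI _ hfv ih =>
    obtain ⟨Δ, hΔ, d⟩ := ih; exact ⟨Δ, hΔ, .allI d (hΔ.fresh_append hfv)⟩
  | allE m _ ih => obtain ⟨Δ, hΔ, d⟩ := ih; exact ⟨Δ, hΔ, .allE m d⟩
  | exI m _ ih => obtain ⟨Δ, hΔ, d⟩ := ih; exact ⟨Δ, hΔ, .exI m d⟩
  | exE _ _ hC hfv ih ihA =>
    obtain ⟨Δ₁, hΔ₁, d₁⟩ := ih
    obtain ⟨Δ₂, hΔ₂, d₂⟩ := ihA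
    have hΔ := hΔ₁.append hΔ₂
    exact ⟨_, hΔ, .exE (d₁.weaken_append hΔ (by simp))
      (d₂.weaken_append hΔ (by simp)) hC (hΔ.fresh_append hfv)⟩
  | botE _ ih => obtain ⟨Δ, hΔ, d⟩ := ih; exact ⟨Δ, hΔ, .botE d⟩
  | em hr _ _ ih₁ ih₂ =>
    obtain ⟨Δ₁, hΔ₁, d₁⟩ := ih₁
    obtain ⟨Δ₂, hΔ₂, d₂⟩ := ih₂
    have hΔ := hΔ₁.append hΔ₂
    exact ⟨_, hΔ, .em hr (d₁.weaken_append hΔ (by simp)) (d₂.weaken_append hΔ (by simp))⟩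

theorem of_closedTheorems (hΔ : ClosedTheorems axs emr Δ) (h : Deriv axs emr Δ F) :
    Deriv axs emr [] F := by
  induction Δ generalizing F with
  | nil => exact h
  | cons D Δ ih =>
    have hΔ' : ClosedTheorems axs emr Δ := fun B hB => hΔ B (List.mem_cons_of_mem _ hB)
    obtain ⟨-, hD⟩ := hΔ D List.mem_cons_self
    exact ih hΔ' (.impE (.impI h) (hD.weaken (hΔ'.extendsByClosed (Γ := []) (List.nil_subset _))))

theorem of_derivable_axioms (hax : ∀ A, axs A → Deriv axs' emr [] A) (h : Deriv axs emr [] F) :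
    Deriv axs' emr [] F := by
  obtain ⟨Δ, hΔ, d⟩ := h.exists_closedTheorems_of_axioms hax
  exact of_closedTheorems hΔ d

end Deriv

/-- **HA proves the ∃-translations of its own axioms**, and consequently every
formula provable in `HA^∃` is provable in HA. -/
theorem ha_proves_exT_axioms :
    (∀ A : Formula, HAAxiom A → Deriv HAAxiom noEM [] A.exT) ∧
    (∀ F : Formula, Deriv HAAxiomExT noEM [] F → Deriv HAAxiom noEM [] F) :=
  ⟨fun _ hA => hA.deriv_exT,
    fun _ h => h.of_derivable_axioms fun _ ⟨_, hB, hA⟩ => hA ▸ hB.deriv_exT⟩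
end
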